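/- Let q ∈ (0,1) and y ≥ 0 be real numbers with q·y < √(1 − q²), and let n ∈ ℝ be such that, in ℝ², the distance from the unit vector (n,1)/‖(n,1)‖ to the ray cone{(y,1)} is at most q. Then |n − y| ≤ q(y² + 1)/(√(1 − q²) − q·y). -/

import Mathlib

open Metric Set

noncomputable section

/-- `ℝ²` realized as the L²-product `ℝ × ℝ`. -/
abbrev R2 := WithLp 2 (ℝ × ℝ)

/-- The vector `(a, b) ∈ ℝ²`. -/
def vec2 (a b : ℝ) : R2 := (WithLp.equiv 2 (ℝ × ℝ)).symm (a, b)

/-- The ray `cone {v} = {λ • v : λ ≥ 0}`. -/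
def ray {V : Type*} [AddCommMonoid V] [Module ℝ V] (v : V) : Set V :=
  {x | ∃ l : ℝ, 0 ≤ l ∧ x = l • v}

/-!
Let `u = (n,1)/‖(n,1)‖` and `v = (y,1)`. The Gram determinant `‖u‖²‖v‖² - ⟪u,v⟫²` does not change
when `u` is replaced by `u - λv`, so it is at most `dist(u, λv)² ‖v‖²`; and if `⟪u,v⟫ ≤ 0` the point
of `cone{v}` nearest to `u` is `0`, at distance `1 > q`. Hence `⟪u,v⟫ ≥ √(1 - q²) ‖v‖`: the angle
between `(n,1)` and `(y,1)` has cosine at least `√(1 - q²)`, so by Lagrange's identity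
`(n² + 1)(y² + 1) - (ny + 1)² = (n - y)²` its sine `|n - y| / (‖(n,1)‖‖(y,1)‖)` is at most `q`.
Feeding `n ≤ y + q‖(n,1)‖‖(y,1)‖` back into the cosine bound gives
`(√(1 - q²) - qy)‖(n,1)‖ ≤ ‖(y,1)‖`, and the two bounds combine to the claim.
-/

open scoped RealInnerProductSpace

lemma ray_nonempty {V : Type*} [AddCommMonoid V] [Module ℝ V] (v : V) : (ray v).Nonempty :=
  ⟨0, 0, le_rfl, (zero_smul ℝ v).symm⟩

section RayDistance

variable {E : Type*} [NormedAddCommGroup E] [InnerProductSpace ℝ E] (u v : E)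

lemma gram_le_norm_sub_smul_sq_mul (l : ℝ) :
    ‖u‖ ^ 2 * ‖v‖ ^ 2 - ⟪u, v⟫ ^ 2 ≤ ‖u - l • v‖ ^ 2 * ‖v‖ ^ 2 := by
  rw [norm_sub_sq_real, inner_smul_right, norm_smul, Real.norm_eq_abs, mul_pow, sq_abs]
  nlinarith [sq_nonneg (⟪u, v⟫ - l * ‖v‖ ^ 2)]

lemma sqrt_gram_le_infDist_ray_mul :
    √(‖u‖ ^ 2 * ‖v‖ ^ 2 - ⟪u, v⟫ ^ 2) ≤ infDist u (ray v) * ‖v‖ := by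
  rcases eq_or_ne v 0 with rfl | hv0
  · simp
  have hv : 0 < ‖v‖ := norm_pos_iff.mpr hv0
  rw [← div_le_iff₀ hv, le_infDist (ray_nonempty v)]
  rintro _ ⟨l, -, rfl⟩
  rw [div_le_iff₀ hv, dist_eq_norm, ← Real.sqrt_sq (by positivity : 0 ≤ ‖u - l • v‖ * ‖v‖),
    mul_pow]
  exact Real.sqrt_le_sqrt (gram_le_norm_sub_smul_sq_mul u v l)

variable {u v}

lemma norm_le_infDist_ray_of_inner_nonpos (h : ⟪u, v⟫ ≤ 0) : ‖u‖ ≤ infDist u (ray v) := by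
  rw [le_infDist (ray_nonempty v)]
  rintro _ ⟨l, hl, rfl⟩
  rw [dist_eq_norm, ← sq_le_sq₀ (norm_nonneg _) (norm_nonneg _), norm_sub_sq_real,
    inner_smul_right, norm_smul, Real.norm_eq_abs, mul_pow, sq_abs]
  nlinarith [mul_nonpos_of_nonneg_of_nonpos hl h, sq_nonneg (l * ‖v‖)]

lemma sqrt_sq_sub_sq_mul_norm_le_inner {q : ℝ} (h : infDist u (ray v) ≤ q) (hq : q < ‖u‖) :
    √(‖u‖ ^ 2 - q ^ 2) * ‖v‖ ≤ ⟪u, v⟫ := by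
  have hpos : 0 < ⟪u, v⟫ := by
    by_contra! hnp
    linarith [norm_le_infDist_ray_of_inner_nonpos hnp]
  have hgram : ‖u‖ ^ 2 * ‖v‖ ^ 2 - ⟪u, v⟫ ^ 2 ≤ (q * ‖v‖) ^ 2 :=
    (Real.sqrt_le_iff.mp ((sqrt_gram_le_infDist_ray_mul u v).trans
      (mul_le_mul_of_nonneg_right h (norm_nonneg v)))).2
  rw [← Real.sqrt_sq (norm_nonneg v), ← Real.sqrt_mul' _ (sq_nonneg _),
    Real.sqrt_le_left hpos.le]
  nlinarith

lemma sqrt_one_sub_sq_mul_le_inner_of_infDist_ray_le {p : E} {q : ℝ} (hp : p ≠ 0)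
    (h : infDist (‖p‖⁻¹ • p) (ray v) ≤ q) (hq : q < 1) :
    √(1 - q ^ 2) * (‖p‖ * ‖v‖) ≤ ⟪p, v⟫ := by
  have hp0 : 0 < ‖p‖ := norm_pos_iff.mpr hp
  have hunit : ‖‖p‖⁻¹ • p‖ = 1 := by
    rw [norm_smul, norm_inv, norm_norm, inv_mul_cancel₀ hp0.ne']
  have key := sqrt_sq_sub_sq_mul_norm_le_inner h (hunit ▸ hq)
  rw [hunit, one_pow, real_inner_smul_left, le_inv_mul_iff₀ hp0] at key
  linarith

end RayDistance

lemma inner_vec2 (a b c d : ℝ) : ⟪vec2 a b, vec2 c d⟫ = a * c + b * d := by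
  simp [vec2, WithLp.prod_inner_apply, mul_comm]

lemma norm_vec2_sq (a b : ℝ) : ‖vec2 a b‖ ^ 2 = a ^ 2 + b ^ 2 := by
  simp [vec2, WithLp.prod_norm_sq_eq_of_L2]

lemma vec2_ne_zero_of_snd_ne_zero {a b : ℝ} (hb : b ≠ 0) : vec2 a b ≠ 0 := by
  intro h
  have : (vec2 a b).snd = b := rfl
  simp [h, eq_comm, hb] at this

lemma abs_sub_le_of_sqrt_one_sub_sq_mul_le {q n y a b : ℝ} (hq0 : 0 ≤ q) (hq1 : q ≤ 1)
    (ha0 : 0 ≤ a) (hb0 : 0 ≤ b) (ha : a ^ 2 = n ^ 2 + 1) (hb : b ^ 2 = y ^ 2 + 1)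
    (h : √(1 - q ^ 2) * (a * b) ≤ n * y + 1) :
    |n - y| ≤ q * (a * b) := by
  have hs : √(1 - q ^ 2) ^ 2 = 1 - q ^ 2 := Real.sq_sqrt (by nlinarith)
  have hcos : (√(1 - q ^ 2) * (a * b)) ^ 2 ≤ (n * y + 1) ^ 2 :=
    pow_le_pow_left₀ (by positivity) h 2
  have hlagrange : (n - y) ^ 2 = a ^ 2 * b ^ 2 - (n * y + 1) ^ 2 := by rw [ha, hb]; ring
  refine abs_le_of_sq_le_sq ?_ (by positivity)
  rw [hlagrange]
  nlinarith

lemma abs_sub_le_div {q s n y a b : ℝ} (hy : 0 ≤ y) (hq : 0 ≤ q) (hb : 0 < b)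
    (hb2 : b ^ 2 = y ^ 2 + 1) (hqy : q * y < s) (hsin : |n - y| ≤ q * (a * b))
    (hcos : s * (a * b) ≤ n * y + 1) :
    |n - y| ≤ q * (y ^ 2 + 1) / (s - q * y) := by
  have hn : n * y ≤ (y + q * (a * b)) * y :=
    mul_le_mul_of_nonneg_right (by linarith [le_abs_self (n - y)]) hy
  have hab : (s - q * y) * a * b ≤ b * b := by nlinarith
  have ha_le : (s - q * y) * a ≤ b := le_of_mul_le_mul_right hab hb
  rw [le_div_iff₀ (by linarith), ← hb2]
  calc |n - y| * (s - q * y) ≤ q * (a * b) * (s - q * y) :=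
        mul_le_mul_of_nonneg_right hsin (by linarith)
    _ = q * b * ((s - q * y) * a) := by ring
    _ ≤ q * b * b := mul_le_mul_of_nonneg_left ha_le (by positivity)
    _ = q * b ^ 2 := by ring

/-- If `q ∈ (0,1)`, `y ≥ 0` with `q·y < √(1 − q²)`, and the distance in `ℝ²` from the
unit vector `(n,1)/‖(n,1)‖` to the ray `cone{(y,1)}` is at most `q`, then
`|n − y| ≤ q(y² + 1)/(√(1 − q²) − q·y)`. -/
theorem planar_error_bound (q y : ℝ) (hq : q ∈ Set.Ioo (0:ℝ) 1) (hy : 0 ≤ y)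
    (hqy : q * y < Real.sqrt (1 - q ^ 2)) (n : ℝ)
    (hn : infDist (‖vec2 n 1‖⁻¹ • vec2 n 1) (ray (vec2 y 1)) ≤ q) :
    |n - y| ≤ q * (y ^ 2 + 1) / (Real.sqrt (1 - q ^ 2) - q * y) := by
  obtain ⟨hq0, hq1⟩ := hq
  have hp : vec2 n 1 ≠ 0 := vec2_ne_zero_of_snd_ne_zero one_ne_zero
  have hnorm_sq (a : ℝ) : ‖vec2 a 1‖ ^ 2 = a ^ 2 + 1 := by rw [norm_vec2_sq, one_pow]
  have hcos : √(1 - q ^ 2) * (‖vec2 n 1‖ * ‖vec2 y 1‖) ≤ n * y + 1 := by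
    simpa only [inner_vec2, mul_one] using
      sqrt_one_sub_sq_mul_le_inner_of_infDist_ray_le hp hn hq1
  have hsin : |n - y| ≤ q * (‖vec2 n 1‖ * ‖vec2 y 1‖) :=
    abs_sub_le_of_sqrt_one_sub_sq_mul_le hq0.le hq1.le (norm_nonneg _) (norm_nonneg _)
      (hnorm_sq n) (hnorm_sq y) hcos
  exact abs_sub_le_div hy hq0.le (norm_pos_iff.mpr (vec2_ne_zero_of_snd_ne_zero one_ne_zero))
    (hnorm_sq y) hqy hsin hcos
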